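/- arXiv:1508.04345 — 3 statements merged into one kernel-verified Lean document; each statement's English description precedes it below -/
import Mathlib

section
/- Let F be a finite subgroup of GL_n(ℂ) and D ∈ ℂ^{n×n} a matrix such that for every A ∈ F there exists B ∈ F with D·A = B·D. Fix A₁ ∈ F and define a sequence (A_j) in F with D·A_i = A_{i+1}·D for all i. Then there exist positive integers l and j such that (A_j·D)^l = D^l. -/
open Matrix

private def prodA {n : ℕ} (A : ℕ → GL (Fin n) ℂ) : ℕ → ℕ → GL (Fin n) ℂ
  | _, 0 => 1
  | j, (l+1) => prodA A j l * A (j + l)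

private lemma prodA_mem {n : ℕ} {F : Subgroup (GL (Fin n) ℂ)} {A : ℕ → GL (Fin n) ℂ}
    (hA : ∀ j, A j ∈ F) (j l : ℕ) : prodA A j l ∈ F := by
  induction l with
  | zero => exact F.one_mem
  | succ l ih => exact F.mul_mem ih (hA _)

private lemma prodA_split {n : ℕ} (A : ℕ → GL (Fin n) ℂ) (j a m : ℕ) :
    prodA A j (a + m) = prodA A j a * prodA A (j + a) m := by
  induction m with
  | zero => simp [prodA]
  | succ m ih =>
    show prodA A j (a + m) * A (j + (a + m)) = _
    rw [ih, prodA, mul_assoc, Nat.add_assoc]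

theorem stmt1 {n : ℕ} (F : Subgroup (GL (Fin n) ℂ)) [Finite F]
    (D : Matrix (Fin n) (Fin n) ℂ)
    (hF : ∀ A ∈ F, ∃ B ∈ F,
      D * (A : Matrix (Fin n) (Fin n) ℂ) = (B : Matrix (Fin n) (Fin n) ℂ) * D)
    (A : ℕ → GL (Fin n) ℂ) (hA : ∀ j, A j ∈ F)
    (hseq : ∀ i, D * (A i : Matrix (Fin n) (Fin n) ℂ)
      = (A (i + 1) : Matrix (Fin n) (Fin n) ℂ) * D) :
    ∃ l j : ℕ, 0 < l ∧ 1 ≤ j ∧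
      ((A j : Matrix (Fin n) (Fin n) ℂ) * D) ^ l = D ^ l := by
  classical
  -- D^k * A i = A (i + k) * D^k
  have hshift : ∀ k i, D ^ k * (A i : Matrix (Fin n) (Fin n) ℂ)
      = (A (i + k) : Matrix (Fin n) (Fin n) ℂ) * D ^ k := by
    intro k
    induction k with
    | zero => intro i; simp
    | succ k ih =>
      intro i
      rw [pow_succ', mul_assoc, ih, ← mul_assoc, hseq, mul_assoc, Nat.add_assoc]
  -- key expansion
  have hkey : ∀ j l, ((A j : Matrix (Fin n) (Fin n) ℂ) * D) ^ l
      = (prodA A j l : Matrix (Fin n) (Fin n) ℂ) * D ^ l := by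
    intro j l
    induction l with
    | zero => simp [prodA]
    | succ l ih =>
      rw [pow_succ, ih, mul_assoc, ← mul_assoc (D ^ l), hshift,
        prodA, Units.val_mul, pow_succ]
      simp [mul_assoc]
  -- prefix products repeat
  have hfin : ∃ a b : ℕ, a ≠ b ∧ prodA A 1 a = prodA A 1 b := by
    obtain ⟨a, b, hab, h⟩ := Finite.exists_ne_map_eq_of_infinite
      (fun k : ℕ => (⟨prodA A 1 k, prodA_mem hA 1 k⟩ : F))
    exact ⟨a, b, hab, congrArg Subtype.val h⟩
  obtain ⟨a, b, hab, h⟩ := hfin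
  wlog hlt : a < b generalizing a b
  · exact this b a hab.symm h.symm (by omega)
  have hb : b = a + (b - a) := by omega
  rw [hb, prodA_split] at h
  have hone : prodA A (1 + a) (b - a) = 1 := by
    have := mul_left_cancel (a := prodA A 1 a) (b := prodA A (1 + a) (b - a)) (c := 1)
      (by rw [mul_one]; exact h.symm)
    exact this
  refine ⟨b - a, 1 + a, by omega, by omega, ?_⟩
  rw [hkey, hone, Units.val_one, one_mul]
end

section
/- Let π be a group, φ : π → π an endomorphism, and k | n. If α, β ∈ π are φ^k-twisted conjugate (i.e., β = γ · α · φ^k(γ)⁻¹ for some γ ∈ π), then γ_{nk}(β) = γ · γ_{nk}(α) · φ^n(γ)⁻¹, i.e., γ_{nk}(α) and γ_{nk}(β) are φ^n-twisted conjugate. In particular the boosting function γ_{nk} is well-defined on Reidemeister classes. -/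
/-- The boosting function `γ_{nk}(α) = α · φ^k(α) · φ^{2k}(α) ⋯ φ^{n-k}(α)`. -/
def boost {π : Type*} [Group π] (φ : Monoid.End π) (n k : ℕ) (α : π) : π :=
  ((List.range (n / k)).map fun i => (φ ^ (i * k)) α).prod

private lemma boost_aux {π : Type*} [Group π] (φ : Monoid.End π) (k : ℕ) (α γ : π) :
    ∀ m : ℕ, ((List.range m).map fun i => (φ ^ (i * k)) (γ * α * ((φ ^ k) γ)⁻¹)).prod
      = γ * ((List.range m).map fun i => (φ ^ (i * k)) α).prod * ((φ ^ (m * k)) γ)⁻¹ := by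
  intro m
  induction m with
  | zero => simp
  | succ m ih =>
      rw [List.range_succ, List.map_append, List.map_append, List.prod_append,
        List.prod_append, ih]
      simp only [List.map_cons, List.map_nil, List.prod_cons, List.prod_nil, mul_one,
        map_mul, map_inv]
      have h1 : (φ ^ (m * k)) ((φ ^ k) γ) = (φ ^ ((m + 1) * k)) γ := by
        rw [add_mul, one_mul, pow_add]
        rfl
      rw [h1]
      group

theorem stmt14 {π : Type*} [Group π] (φ : Monoid.End π) (k n : ℕ)
    (hk : 0 < k) (hn : 0 < n) (hkn : k ∣ n) (α β γ : π)
    (h : β = γ * α * ((φ ^ k) γ)⁻¹) :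
    boost φ n k β = γ * boost φ n k α * ((φ ^ n) γ)⁻¹ := by
  subst h
  unfold boost
  rw [boost_aux, Nat.div_mul_cancel hkn]
end

section
/- Let F ⊆ GL_m(ℝ) be a finite group and D ∈ ℝ^{m×m} such that for every A ∈ F there exists B ∈ F with D·A = B·D. If D has no eigenvalue that is a root of unity (semi-hyperbolicity), then for every A ∈ F and every positive integer n, det(I − A·D^n) ≠ 0. -/
open Matrix

theorem stmt16 {m : ℕ} (F : Subgroup (GL (Fin m) ℝ)) [Finite F]
    (D : Matrix (Fin m) (Fin m) ℝ)
    (hF : ∀ A ∈ F, ∃ B ∈ F,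
      D * (A : Matrix (Fin m) (Fin m) ℝ) = (B : Matrix (Fin m) (Fin m) ℝ) * D)
    (hsh : ∀ μ ∈ spectrum ℂ (D.map (algebraMap ℝ ℂ)), ∀ j : ℕ, 0 < j → μ ^ j ≠ 1) :
    ∀ A ∈ F, ∀ n : ℕ, 0 < n →
      (1 - (A : Matrix (Fin m) (Fin m) ℝ) * D ^ n).det ≠ 0 := by
  intro A hA n hn hdet
  -- Step 1: D^k * A = B * D^k for some B ∈ F
  have key : ∀ k : ℕ, ∀ A ∈ F, ∃ B ∈ F,
      D ^ k * (A : Matrix (Fin m) (Fin m) ℝ) = (B : Matrix (Fin m) (Fin m) ℝ) * D ^ k := by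
    intro k
    induction k with
    | zero => intro A hA; exact ⟨A, hA, by simp⟩
    | succ k ih =>
      intro A hA
      obtain ⟨B, hB, hB2⟩ := ih A hA
      obtain ⟨C, hC, hC2⟩ := hF B hB
      refine ⟨C, hC, ?_⟩
      calc D ^ (k+1) * (A : Matrix (Fin m) (Fin m) ℝ)
          = D * (D ^ k * (A : Matrix (Fin m) (Fin m) ℝ)) := by rw [pow_succ', mul_assoc]
        _ = (D * (B : Matrix (Fin m) (Fin m) ℝ)) * D ^ k := by rw [hB2, mul_assoc]
        _ = (C : Matrix (Fin m) (Fin m) ℝ) * D ^ (k+1) := by rw [hC2, pow_succ', mul_assoc]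
  -- Step 2: (A * D^n)^k = C * D^(n*k)
  have key2 : ∀ k : ℕ, ∃ C ∈ F,
      ((A : Matrix (Fin m) (Fin m) ℝ) * D ^ n) ^ k
        = (C : Matrix (Fin m) (Fin m) ℝ) * D ^ (n * k) := by
    intro k
    induction k with
    | zero => exact ⟨1, one_mem F, by simp⟩
    | succ k ih =>
      obtain ⟨C, hC, hC2⟩ := ih
      obtain ⟨B, hB, hB2⟩ := key (n * k) A hA
      refine ⟨C * B, mul_mem hC hB, ?_⟩
      calc ((A : Matrix (Fin m) (Fin m) ℝ) * D ^ n) ^ (k + 1)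
          = ((C : Matrix (Fin m) (Fin m) ℝ) * D ^ (n*k)) * ((A : Matrix (Fin m) (Fin m) ℝ) * D ^ n) := by
            rw [pow_succ, hC2]
        _ = (C : Matrix (Fin m) (Fin m) ℝ) * (D ^ (n*k) * (A : Matrix (Fin m) (Fin m) ℝ)) * D ^ n := by
            simp only [mul_assoc]
        _ = (C : Matrix (Fin m) (Fin m) ℝ) * ((B : Matrix (Fin m) (Fin m) ℝ) * D ^ (n*k)) * D ^ n := by rw [hB2]
        _ = ((C * B : GL (Fin m) ℝ) : Matrix (Fin m) (Fin m) ℝ) * D ^ (n * (k+1)) := by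
            rw [Units.val_mul, mul_add, mul_one, pow_add]; simp only [mul_assoc]
  -- choose the C's
  choose c hcF hc using key2
  -- find repetition
  obtain ⟨k, k', hne, heq⟩ := Finite.exists_ne_map_eq_of_infinite
    (fun k : ℕ => (⟨c k, hcF k⟩ : F))
  wlog hlt : k < k' generalizing k k'
  · exact this k' k hne.symm heq.symm (by omega)
  have hceq : c k = c k' := by simpa using congrArg (Subtype.val) heq
  -- move to ℂ
  set f := (algebraMap ℝ ℂ)
  set Dc := D.map f with hDc
  have mpow : ∀ (M : Matrix (Fin m) (Fin m) ℝ) (j : ℕ), (M ^ j).map f = (M.map f) ^ j := by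
    intro M j
    have := map_pow f.mapMatrix M j
    simpa [RingHom.mapMatrix_apply] using this
  have hdetC : (1 - (A : Matrix (Fin m) (Fin m) ℝ).map f * Dc ^ n).det = 0 := by
    have h := congrArg f hdet
    rw [map_zero, RingHom.map_det, RingHom.mapMatrix_apply] at h
    have h2 : (1 - (A : Matrix (Fin m) (Fin m) ℝ) * D ^ n).map f
        = 1 - (A : Matrix (Fin m) (Fin m) ℝ).map f * Dc ^ n := by
      have := map_sub f.mapMatrix 1 ((A : Matrix (Fin m) (Fin m) ℝ) * D ^ n)
      simpa [RingHom.mapMatrix_apply, Matrix.map_mul, mpow] using this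
    rwa [h2] at h
  -- eigenvector
  obtain ⟨v, hv0, hv⟩ := (Matrix.exists_mulVec_eq_zero_iff).mpr hdetC
  have hvfix : ((A : Matrix (Fin m) (Fin m) ℝ).map f * Dc ^ n) *ᵥ v = v := by
    have := hv
    rw [sub_mulVec, one_mulVec, sub_eq_zero] at this
    exact this.symm
  have hiter : ∀ j : ℕ, (((A : Matrix (Fin m) (Fin m) ℝ) * D ^ n) ^ j).map f *ᵥ v = v := by
    intro j
    induction j with
    | zero => simp
    | succ j ih =>
      rw [pow_succ', Matrix.map_mul, ← mulVec_mulVec, ih, Matrix.map_mul, mpow]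
      exact hvfix
  -- use the repetition
  have h1 : ((c k : Matrix (Fin m) (Fin m) ℝ)).map f *ᵥ (Dc ^ (n*k) *ᵥ v) = v := by
    have := hiter k
    rwa [hc k, Matrix.map_mul, mpow, ← mulVec_mulVec] at this
  have h2 : ((c k : Matrix (Fin m) (Fin m) ℝ)).map f *ᵥ (Dc ^ (n*k') *ᵥ v) = v := by
    have := hiter k'
    rwa [hc k', ← hceq, Matrix.map_mul, mpow, ← mulVec_mulVec] at this
  -- cancel the invertible matrix c k
  have hinj : ∀ x y : Fin m → ℂ, ((c k : Matrix (Fin m) (Fin m) ℝ)).map f *ᵥ x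
      = ((c k : Matrix (Fin m) (Fin m) ℝ)).map f *ᵥ y → x = y := by
    intro x y hxy
    have hcinv : (((c k)⁻¹ : GL (Fin m) ℝ) : Matrix (Fin m) (Fin m) ℝ).map f
        * ((c k : Matrix (Fin m) (Fin m) ℝ)).map f = 1 := by
      rw [← Matrix.map_mul]
      have : (((c k)⁻¹ : GL (Fin m) ℝ) : Matrix (Fin m) (Fin m) ℝ)
          * ((c k : Matrix (Fin m) (Fin m) ℝ)) = 1 := by
        have h := congrArg Units.val (inv_mul_cancel (c k))
        rwa [Units.val_mul, Units.val_one] at h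
      rw [this, Matrix.map_one f (map_zero f) (map_one f)]
    have := congrArg (fun w => (((c k)⁻¹ : GL (Fin m) ℝ) : Matrix (Fin m) (Fin m) ℝ).map f *ᵥ w) hxy
    simpa [mulVec_mulVec, hcinv] using this
  have hDeq : Dc ^ (n*k) *ᵥ v = Dc ^ (n*k') *ᵥ v := hinj _ _ (h1.trans h2.symm)
  -- w := Dc^(n*k) *ᵥ v is a fixed nonzero vector of Dc^(n*(k'-k))
  set w := Dc ^ (n*k) *ᵥ v with hw
  have hw0 : w ≠ 0 := by
    intro h0
    apply hv0
    have : ((c k : Matrix (Fin m) (Fin m) ℝ)).map f *ᵥ w = v := h1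
    rw [h0] at this
    simpa using this.symm
  have hwfix : Dc ^ (n*(k'-k)) *ᵥ w = w := by
    rw [hw, mulVec_mulVec, ← pow_add]
    rw [← Nat.mul_add, Nat.sub_add_cancel hlt.le, ← hDeq]
  -- 1 ∈ spectrum of Dc ^ (n*(k'-k))
  have hmem : (1 : ℂ) ∈ spectrum ℂ (Dc ^ (n*(k'-k))) := by
    rw [spectrum.mem_iff]
    intro hu
    rw [Matrix.isUnit_iff_isUnit_det] at hu
    have : (algebraMap ℂ (Matrix (Fin m) (Fin m) ℂ) 1 - Dc ^ (n*(k'-k))).det = 0 := by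
      rw [Matrix.exists_mulVec_eq_zero_iff.symm]
      refine ⟨w, hw0, ?_⟩
      rw [_root_.map_one, sub_mulVec, one_mulVec, hwfix, sub_self]
    exact hu.ne_zero this
  -- spectral mapping
  have hpos : 0 < n * (k' - k) := Nat.mul_pos hn (by omega)
  rw [spectrum.map_pow_of_pos Dc hpos] at hmem
  obtain ⟨μ, hμ, hμ1⟩ := hmem
  exact hsh μ hμ (n * (k' - k)) hpos hμ1
end
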